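/- arXiv:2112.05955 — 4 statements merged into one kernel-verified Lean document; each statement's English description precedes it below -/
import Mathlib

section
/- Let n ≥ 1, let C ⊆ ℂⁿ be a compact set and let S ⊆ C be a closed subset (playing the role of the boundary ∂C of C). Assume that through every point p ∈ C \ S there passes a nonconstant germ of a complex curve lying in C \ S. Then C satisfies the maximum modulus principle with respect to S: for every open set U ⊆ ℂⁿ with C ⊆ U, every function f : ℂⁿ → ℂ holomorphic on U, and every p ∈ C, there exists q ∈ S with |f(p)| ≤ |f(q)|. -/
/-- A nonconstant germ of a complex curve through `p` lying in `A ⊆ ℂⁿ`: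
a map `γ : ℂ → ℂⁿ`, holomorphic on the open unit disc, with `γ 0 = p`,
image of the disc contained in `A`, and `γ` nonconstant on the disc. -/
def HasCurveGerm {n : ℕ} (A : Set (Fin n → ℂ)) (p : Fin n → ℂ) : Prop :=
  ∃ γ : ℂ → (Fin n → ℂ), DifferentiableOn ℂ γ (Metric.ball (0 : ℂ) 1) ∧ γ 0 = p ∧
    γ '' Metric.ball (0 : ℂ) 1 ⊆ A ∧ ∃ z ∈ Metric.ball (0 : ℂ) 1, γ z ≠ p

/-!
Suppose `‖f‖` stays below `‖f p‖` on `S`. Then the set `K₀` of maximum points of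
`‖f‖` on `C` is a nonempty compact subset of `C \ S`, and by the maximum modulus principle in one
variable every holomorphic disc in `C \ S` centred in `K₀` stays in `K₀`. Successively shrinking
`K₀` to the maximum points of `‖zᵢ‖` for each coordinate `zᵢ` preserves these properties, and on
the final set every such disc has constant coordinates, so it is constant: no nonconstant germ
passes through its points.
-/

open Metric Set

variable {E F : Type*} [NormedAddCommGroup E] [NormedSpace ℂ E]
  [NormedAddCommGroup F] [NormedSpace ℂ F] [StrictConvexSpace ℝ F]

def AbsorbsHolomorphicDiscs (A K : Set E) : Prop :=
  ∀ γ : ℂ → E, DifferentiableOn ℂ γ (ball 0 1) → γ 0 ∈ K → γ '' ball 0 1 ⊆ A →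
    γ '' ball 0 1 ⊆ K

lemma absorbsHolomorphicDiscs_of_subset {A K : Set E} (hAK : A ⊆ K) :
    AbsorbsHolomorphicDiscs A K :=
  fun _ _ _ hγA => hγA.trans hAK

lemma eqOn_comp_of_isMaxOn_norm_image_ball {A : Set E} {g : E → F} {γ : ℂ → E}
    (hg : DifferentiableOn ℂ g A) (hγ : DifferentiableOn ℂ γ (ball 0 1))
    (hγA : γ '' ball 0 1 ⊆ A) (hmax : IsMaxOn (‖g ·‖) (γ '' ball 0 1) (γ 0)) :
    EqOn (g ∘ γ) (fun _ => g (γ 0)) (ball 0 1) :=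
  Complex.eqOn_of_isPreconnected_of_isMaxOn_norm (convex_ball 0 1).isPreconnected isOpen_ball
    (hg.comp hγ (image_subset_iff.mp hγA)) (mem_ball_self one_pos)
    (fun _ hz => hmax (mem_image_of_mem γ hz))

namespace AbsorbsHolomorphicDiscs

variable {A K : Set E}

lemma exists_isMaxOn_norm (hK : AbsorbsHolomorphicDiscs A K) (hKc : IsCompact K)
    (hKne : K.Nonempty) {g : E → F} (hgK : ContinuousOn g K) (hgA : DifferentiableOn ℂ g A) :
    ∃ K' ⊆ K, K'.Nonempty ∧ IsCompact K' ∧ AbsorbsHolomorphicDiscs A K' ∧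
      ∀ x ∈ K', IsMaxOn (‖g ·‖) K x := by
  obtain ⟨x₀, hx₀K, hx₀max⟩ := hKc.exists_isMaxOn hKne hgK.norm
  have hmax : ∀ x ∈ K ∩ (‖g ·‖) ⁻¹' {‖g x₀‖}, IsMaxOn (‖g ·‖) K x :=
    fun x hx y hy => (hx₀max hy).trans_eq hx.2.symm
  refine ⟨K ∩ (‖g ·‖) ⁻¹' {‖g x₀‖}, inter_subset_left, ⟨x₀, hx₀K, rfl⟩,
    hKc.of_isClosed_subset (hgK.norm.preimage_isClosed_of_isClosed hKc.isClosed
      isClosed_singleton) inter_subset_left, fun γ hγ hγ0 hγA => ?_, hmax⟩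
  have hγK : γ '' ball 0 1 ⊆ K := hK γ hγ hγ0.1 hγA
  have hconst := eqOn_comp_of_isMaxOn_norm_image_ball hgA hγ hγA
    ((hmax _ hγ0).on_subset hγK)
  rintro _ ⟨z, hz, rfl⟩
  exact ⟨hγK (mem_image_of_mem γ hz), (congrArg norm (hconst hz)).trans hγ0.2⟩

lemma exists_forall_isMaxOn_norm {ι : Type*} (hK : AbsorbsHolomorphicDiscs A K)
    (hKc : IsCompact K) (hKne : K.Nonempty) (s : Finset ι) {g : ι → E → F}
    (hgK : ∀ i, ContinuousOn (g i) K) (hgA : ∀ i, DifferentiableOn ℂ (g i) A) :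
    ∃ K' ⊆ K, K'.Nonempty ∧ IsCompact K' ∧ AbsorbsHolomorphicDiscs A K' ∧
      ∀ i ∈ s, ∀ x ∈ K', IsMaxOn (‖g i ·‖) K' x := by
  classical
  induction s using Finset.induction_on with
  | empty => exact ⟨K, subset_rfl, hKne, hKc, hK, by simp⟩
  | insert i s _ ih =>
    obtain ⟨K₁, hK₁K, hK₁ne, hK₁c, hK₁, hmax₁⟩ := ih
    obtain ⟨K₂, hK₂K₁, hK₂ne, hK₂c, hK₂, hmax₂⟩ :=
      hK₁.exists_isMaxOn_norm hK₁c hK₁ne ((hgK i).mono hK₁K) (hgA i)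
    refine ⟨K₂, hK₂K₁.trans hK₁K, hK₂ne, hK₂c, hK₂, fun j hj x hx => ?_⟩
    rcases Finset.mem_insert.mp hj with rfl | hj
    · exact (hmax₂ x hx).on_subset hK₂K₁
    · exact (hmax₁ j hj x (hK₂K₁ hx)).on_subset hK₂K₁

end AbsorbsHolomorphicDiscs

lemma AbsorbsHolomorphicDiscs.exists_not_hasCurveGerm {n : ℕ} {A K : Set (Fin n → ℂ)}
    (hK : AbsorbsHolomorphicDiscs A K) (hKc : IsCompact K) (hKne : K.Nonempty) :
    ∃ q ∈ K, ¬ HasCurveGerm A q := by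
  obtain ⟨K', hK'K, ⟨q, hq⟩, -, hK', hmax⟩ :=
    hK.exists_forall_isMaxOn_norm hKc hKne Finset.univ (g := fun i x => x i)
      (fun i => (continuous_apply i).continuousOn)
      (fun i => (differentiable_apply i).differentiableOn)
  refine ⟨q, hK'K hq, fun ⟨γ, hγ, hγ0, hγA, z, hz, hγz⟩ => hγz (funext fun i => ?_)⟩
  have hγK' : γ '' ball 0 1 ⊆ K' := hK' γ hγ (hγ0 ▸ hq) hγA
  have hi := eqOn_comp_of_isMaxOn_norm_image_ball (g := fun x => x i)
    (differentiable_apply i).differentiableOn hγ hγA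
    ((hmax i (Finset.mem_univ i) (γ 0) (hγ0 ▸ hq)).on_subset hγK') hz
  simpa [hγ0] using hi

theorem maximum_modulus_of_curve_germs_general
    (n : ℕ) (C S : Set (Fin n → ℂ)) (hC : IsCompact C)
    (hgerm : ∀ p ∈ C \ S, HasCurveGerm (C \ S) p) :
    ∀ U : Set (Fin n → ℂ), IsOpen U → C ⊆ U →
      ∀ f : (Fin n → ℂ) → ℂ, DifferentiableOn ℂ f U →
        ∀ p ∈ C, ∃ q ∈ S, ‖f p‖ ≤ ‖f q‖ := by
  intro U _ hCU f hf p hp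
  by_contra! hS
  obtain ⟨K₀, hK₀C, hK₀ne, hK₀c, hK₀, hmax⟩ :=
    (absorbsHolomorphicDiscs_of_subset sdiff_subset).exists_isMaxOn_norm hC ⟨p, hp⟩
      (hf.continuousOn.mono hCU) (hf.mono (sdiff_subset.trans hCU))
  have hK₀S : K₀ ⊆ C \ S := fun x hx =>
    ⟨hK₀C hx, fun hxS => (hS x hxS).not_ge (hmax x hx hp)⟩
  obtain ⟨q, hq, hnot⟩ := hK₀.exists_not_hasCurveGerm hK₀c hK₀ne
  exact hnot (hgerm q (hK₀S hq))

/-- Proposition 2.6 of the paper: if through every point of `C \ S` there passes a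
nonconstant germ of a complex curve lying in `C \ S`, then `(C, S)` satisfies the
maximum modulus principle. -/
theorem maximum_modulus_of_curve_germs
    (n : ℕ) (hn : 1 ≤ n) (C S : Set (Fin n → ℂ)) (hC : IsCompact C)
    (hS : IsClosed S) (hSC : S ⊆ C)
    (hgerm : ∀ p ∈ C \ S, HasCurveGerm (C \ S) p) :
    ∀ U : Set (Fin n → ℂ), IsOpen U → C ⊆ U →
      ∀ f : (Fin n → ℂ) → ℂ, DifferentiableOn ℂ f U →
        ∀ p ∈ C, ∃ q ∈ S, ‖f p‖ ≤ ‖f q‖ :=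
  maximum_modulus_of_curve_germs_general n C S hC hgerm
end

section
/- For every n, there is no nonempty compact set K ⊆ ℂⁿ such that through every point of K there passes a nonconstant germ of a complex curve lying in K. Precisely: if K ⊆ ℂⁿ is compact and for every p ∈ K there exists a map γ : ℂ → ℂⁿ holomorphic on the open unit disc 𝔻 with γ(0) = p, γ(𝔻) ⊆ K, and γ nonconstant on 𝔻, then K = ∅. -/
open Metric Set

theorem Complex.eqOn_ball_of_mapsTo_of_isMaxOn_norm {F : Type*} [NormedAddCommGroup F]
    [NormedSpace ℂ F] [StrictConvexSpace ℝ F] {K : Set F} {p : F} (hp : IsMaxOn norm K p)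
    {γ : ℂ → F} (hγ : DifferentiableOn ℂ γ (ball 0 1)) (hγ0 : γ 0 = p)
    (hγK : MapsTo γ (ball 0 1) K) : EqOn γ (Function.const ℂ p) (ball 0 1) := by
  have hmax : IsMaxOn (norm ∘ γ) (ball 0 1) 0 := fun z hz => by
    simpa [hγ0] using hp (hγK hz)
  simpa [hγ0] using Complex.eqOn_of_isPreconnected_of_isMaxOn_norm
    (convex_ball (0 : ℂ) 1).isPreconnected isOpen_ball hγ (mem_ball_self one_pos) hmax

theorem not_hasCurveGerm_of_isMaxOn_euclideanNorm {n : ℕ} {K : Set (Fin n → ℂ)}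
    {p : Fin n → ℂ} (hp : IsMaxOn (fun x => ‖WithLp.toLp 2 x‖) K p) : ¬HasCurveGerm K p := by
  rintro ⟨γ, hγ, hγ0, hγK, z, hz, hγz⟩
  let e := (PiLp.continuousLinearEquiv 2 ℂ (fun _ : Fin n => ℂ)).symm
  have hmax : IsMaxOn norm (e '' K) (e p) := by
    rintro _ ⟨x, hx, rfl⟩
    exact hp hx
  have hconst := Complex.eqOn_ball_of_mapsTo_of_isMaxOn_norm hmax
    (e.differentiable.comp_differentiableOn hγ) (congrArg e hγ0)
    (fun w hw => mem_image_of_mem e (hγK (mem_image_of_mem γ hw)))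
  exact hγz (e.injective (hconst hz))

/-- No nonempty compact subset of ℂⁿ carries a nonconstant germ of a complex curve
through each of its points. -/
theorem eq_empty_of_compact_of_curve_germs
    (n : ℕ) (K : Set (Fin n → ℂ)) (hK : IsCompact K)
    (hgerm : ∀ p ∈ K, HasCurveGerm K p) : K = ∅ := by
  refine eq_empty_iff_forall_notMem.mpr fun q hq => ?_
  obtain ⟨p, hpK, hp⟩ := hK.exists_isMaxOn ⟨q, hq⟩
    (continuous_norm.comp (PiLp.continuous_toLp 2 _)).continuousOn
  exact not_hasCurveGerm_of_isMaxOn_euclideanNorm hp (hgerm p hpK)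
end

section
/- Let K ⊆ ℂⁿ be a nonempty compact set such that through every point of K there passes a nonconstant germ of a complex curve lying in K. Let U ⊆ ℂⁿ be open with K ⊆ U, let g be holomorphic on U, and let p ∈ K satisfy |g(z)| ≤ |g(p)| for all z ∈ K. Then the level set K′ := {z ∈ K : g(z) = g(p)} is a nonempty compact set which again has the property that through every point of K′ there passes a nonconstant germ of a complex curve lying in K′. -/
/-!
Every point `q` of the level set is again a maximum of `‖g‖` on `K`. Along a curve germ `γ` in `K`
through `q`, `g ∘ γ` is holomorphic on the disc with `‖g ∘ γ‖` maximal at the centre, so by the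
maximum modulus principle `g ∘ γ` is constant: the germ lies in the level set.
-/
open Set Metric Function

theorem IsCompact.sep_eq_of_continuousOn {X Y : Type*} [TopologicalSpace X] [T2Space X]
    [TopologicalSpace Y] [T1Space Y] {K : Set X} (hK : IsCompact K) {g : X → Y}
    (hg : ContinuousOn g K) (c : Y) : IsCompact {z ∈ K | g z = c} :=
  hK.of_isClosed_subset (hg.preimage_isClosed_of_isClosed hK.isClosed isClosed_singleton)
    fun _ hz => hz.1

theorem HasCurveGerm.sep_eq_of_isMaxOn_norm {F : Type*} [NormedAddCommGroup F]
    [NormedSpace ℂ F] [StrictConvexSpace ℝ F] {n : ℕ} {A : Set (Fin n → ℂ)}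
    {g : (Fin n → ℂ) → F} {q : Fin n → ℂ} (hq : HasCurveGerm A q) (hg : DifferentiableOn ℂ g A)
    (hmax : IsMaxOn (‖g ·‖) A q) : HasCurveGerm {z ∈ A | g z = g q} q := by
  obtain ⟨γ, hγd, hγ0, hγA, z₀, hz₀, hz₀q⟩ := hq
  have hmaps : MapsTo γ (ball 0 1) A := fun x hx => hγA (mem_image_of_mem γ hx)
  have hconst : EqOn (g ∘ γ) (const ℂ (g (γ 0))) (ball 0 1) :=
    Complex.eqOn_of_isPreconnected_of_isMaxOn_norm (convex_ball 0 1).isPreconnected isOpen_ball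
      (hg.comp hγd hmaps) (mem_ball_self one_pos) (hmax.comp_mapsTo hmaps hγ0)
  refine ⟨γ, hγd, hγ0, ?_, z₀, hz₀, hz₀q⟩
  rintro _ ⟨x, hx, rfl⟩
  exact ⟨hmaps hx, hγ0 ▸ hconst hx⟩

theorem level_set_curve_germs_general
    (n : ℕ) (K : Set (Fin n → ℂ)) (hK : IsCompact K)
    (hgerm : ∀ p ∈ K, HasCurveGerm K p)
    (U : Set (Fin n → ℂ)) (hKU : K ⊆ U)
    (g : (Fin n → ℂ) → ℂ) (hg : DifferentiableOn ℂ g U)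
    (p : Fin n → ℂ) (hp : p ∈ K)
    (hmax : ∀ z ∈ K, ‖g z‖ ≤ ‖g p‖) :
    ({z ∈ K | g z = g p}).Nonempty ∧ IsCompact {z ∈ K | g z = g p} ∧
      ∀ q ∈ {z ∈ K | g z = g p}, HasCurveGerm {z ∈ K | g z = g p} q := by
  have hgK : DifferentiableOn ℂ g K := hg.mono hKU
  refine ⟨⟨p, hp, rfl⟩, hK.sep_eq_of_continuousOn hgK.continuousOn _, ?_⟩
  rintro q ⟨hqK, hq⟩
  have hmaxq : IsMaxOn (‖g ·‖) K q := isMaxOn_iff.2 fun z hz => hq ▸ hmax z hz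
  simpa only [hq] using (hgerm q hqK).sep_eq_of_isMaxOn_norm hgK hmaxq

/-- Inductive step in the proof of Proposition 2.6: the extremal level set of a
holomorphic function on a compact set filled by curve germs is again a nonempty
compact set filled by curve germs. -/
theorem level_set_curve_germs
    (n : ℕ) (K : Set (Fin n → ℂ)) (hne : K.Nonempty) (hK : IsCompact K)
    (hgerm : ∀ p ∈ K, HasCurveGerm K p)
    (U : Set (Fin n → ℂ)) (hU : IsOpen U) (hKU : K ⊆ U)
    (g : (Fin n → ℂ) → ℂ) (hg : DifferentiableOn ℂ g U)
    (p : Fin n → ℂ) (hp : p ∈ K)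
    (hmax : ∀ z ∈ K, ‖g z‖ ≤ ‖g p‖) :
    ({z ∈ K | g z = g p}).Nonempty ∧ IsCompact {z ∈ K | g z = g p} ∧
      ∀ q ∈ {z ∈ K | g z = g p}, HasCurveGerm {z ∈ K | g z = g p} q :=
  level_set_curve_germs_general n K hK hgerm U hKU g hg p hp hmax
end

section
/- Let D ⊆ ℂⁿ be open, let C ⊆ D be compact and S ⊆ C, and assume the pair (C, S) satisfies the maximum modulus principle relative to D. Let ρ > 0 be such that the closed ρ-thickening {z : dist(z, S) ≤ ρ} (in the sup metric) is contained in D, let f be holomorphic on D, and let M ≥ 0 satisfy |f(z)| ≤ M for every z with dist(z, S) ≤ ρ. Then for every point z ∈ C and every multi-index m ∈ ℕⁿ one has |∂^m f(z)| ≤ M · m!/ρ^{|m|}. -/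
/-- Partial derivative of `f : ℂⁿ → ℂ` in the `i`-th coordinate direction. -/
noncomputable def partialDeriv {n : ℕ} (i : Fin n) (f : (Fin n → ℂ) → ℂ) :
    (Fin n → ℂ) → ℂ :=
  fun z => fderiv ℂ f z (Pi.single i 1)

/-- Mixed partial derivative `∂^m f` for a multi-index `m : Fin n → ℕ`. -/
noncomputable def mixedPartialDeriv {n : ℕ} (m : Fin n → ℕ) (f : (Fin n → ℂ) → ℂ) :
    (Fin n → ℂ) → ℂ :=
  ((List.ofFn fun i : Fin n => (partialDeriv i)^[m i]).foldr (· ∘ ·) id) f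

/-- The pair `(C, S)` satisfies the maximum modulus principle relative to `D`. -/
def SatisfiesMMP {n : ℕ} (D C S : Set (Fin n → ℂ)) : Prop :=
  ∀ g : (Fin n → ℂ) → ℂ, DifferentiableOn ℂ g D →
    ∀ z ∈ C, ∃ w ∈ S, ‖g z‖ ≤ ‖g w‖

/-! Every mixed partial derivative of a holomorphic function is again holomorphic: near each
point a directional derivative is a Cauchy integral along a complex line, and that integral can
be differentiated under the integral sign because the Cauchy estimate bounds `fderiv f` locally.
So the maximum modulus principle applies to `∂^m f` and moves `z ∈ C` to some `w ∈ S`. The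
polydisc of polyradius `ρ` about `w` lies in the `ρ`-thickening of `S`, and the Cauchy
inequalities on it follow from the one-variable Cauchy estimate, one coordinate at a time. -/

open Metric Set Complex Filter Topology Real MeasureTheory

section ComplexLine

variable {E F : Type*} [NormedAddCommGroup E] [NormedSpace ℂ E]
  [NormedAddCommGroup F] [NormedSpace ℂ F]

theorem DifferentiableAt.hasDerivAt_comp_add_smul {f : E → F} {z v : E} {ζ₀ : ℂ}
    (hf : DifferentiableAt ℂ f (z + ζ₀ • v)) :
    HasDerivAt (fun ζ : ℂ => f (z + ζ • v)) (fderiv ℂ f (z + ζ₀ • v) v) ζ₀ := by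
  have hline : HasDerivAt (fun ζ : ℂ => z + ζ • v) v ζ₀ := by
    simpa using ((hasDerivAt_id ζ₀).smul_const v).const_add z
  exact hf.hasFDerivAt.comp_hasDerivAt ζ₀ hline

theorem norm_fderiv_le_of_forall_mem_closedBall_norm_le {f : E → F} {a : E} {r K : ℝ}
    (hr : 0 < r) (hf : DifferentiableOn ℂ f (closedBall a r))
    (hK : ∀ x ∈ closedBall a r, ‖f x‖ ≤ K) :
    ‖fderiv ℂ f a‖ ≤ K / r := by
  have hK₀ : 0 ≤ K := (norm_nonneg _).trans (hK a (mem_closedBall_self hr.le))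
  refine ContinuousLinearMap.opNorm_le_bound _ (by positivity) fun v => ?_
  rcases eq_or_ne v 0 with rfl | hv
  · simp
  have hv₀ : 0 < ‖v‖ := norm_pos_iff.mpr hv
  have hR : 0 < r / ‖v‖ := div_pos hr hv₀
  have hmaps : MapsTo (fun ζ : ℂ => a + ζ • v) (closedBall 0 (r / ‖v‖)) (closedBall a r) := by
    intro ζ hζ
    rw [mem_closedBall_zero_iff, le_div_iff₀ hv₀] at hζ
    simpa [norm_smul] using hζ
  have hslice : DifferentiableOn ℂ (fun ζ : ℂ => f (a + ζ • v)) (closedBall 0 (r / ‖v‖)) :=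
    hf.comp ((differentiable_id.smul_const v).const_add a).differentiableOn hmaps
  have hderiv : deriv (fun ζ : ℂ => f (a + ζ • v)) 0 = fderiv ℂ f a v := by
    have hfa : DifferentiableAt ℂ f (a + (0 : ℂ) • v) := by
      simpa using hf.differentiableAt (closedBall_mem_nhds a hr)
    simpa using hfa.hasDerivAt_comp_add_smul.deriv
  calc ‖fderiv ℂ f a v‖ ≤ K / (r / ‖v‖) := by
        rw [← hderiv]
        exact norm_deriv_le_of_forall_mem_sphere_norm_le hR (hslice.diffContOnCl_ball le_rfl)
          fun ζ hζ => hK _ (hmaps (sphere_subset_closedBall hζ))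
    _ = K / r * ‖v‖ := by field_simp

theorem fderiv_apply_eq_circleIntegral [CompleteSpace F] {f : E → F} {s : Set E} {z v : E} {r : ℝ}
    (hr : 0 < r) (hf : DifferentiableOn ℂ f s) (hs : IsOpen s)
    (hmaps : MapsTo (fun ζ : ℂ => z + ζ • v) (closedBall 0 r) s) :
    fderiv ℂ f z v = (2 * π * I)⁻¹ • ∮ ζ in C(0, r), (1 / ζ ^ 2) • f (z + ζ • v) := by
  have hslice : DifferentiableOn ℂ (fun ζ : ℂ => f (z + ζ • v)) (closedBall 0 r) :=
    hf.comp ((differentiable_id.smul_const v).const_add z).differentiableOn hmaps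
  have hfz : DifferentiableAt ℂ f (z + (0 : ℂ) • v) :=
    hf.differentiableAt (hs.mem_nhds (hmaps (mem_closedBall_self hr.le)))
  have hcauchy := hslice.deriv_eq_smul_circleIntegral hr
  rw [hfz.hasDerivAt_comp_add_smul.deriv] at hcauchy
  simp only [sub_zero, zero_smul, add_zero] at hcauchy
  rw [hcauchy, inv_smul_smul₀ two_pi_I_ne_zero]

theorem differentiableAt_circleIntegral_smul_comp_add_smul [FiniteDimensional ℂ E]
    {f : E → ℂ} {g : ℂ → ℂ} {U : Set E} {z₀ v : E} {r C : ℝ} (hr : 0 ≤ r) (hU : U ∈ 𝓝 z₀)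
    (hg : ContinuousOn g (sphere 0 r))
    (hf : ∀ x ∈ U, ∀ ζ ∈ sphere (0 : ℂ) r, DifferentiableAt ℂ f (x + ζ • v))
    (hC : ∀ x ∈ U, ∀ ζ ∈ sphere (0 : ℂ) r, ‖fderiv ℂ f (x + ζ • v)‖ ≤ C) :
    DifferentiableAt ℂ (fun x => ∮ ζ in C(0, r), g ζ • f (x + ζ • v)) z₀ := by
  borelize E
  set γ := circleMap (0 : ℂ) r
  have hγ : ∀ θ, γ θ ∈ sphere 0 r := circleMap_mem_sphere 0 hr
  have hdγ : Continuous fun θ => deriv γ θ := by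
    simp only [γ, deriv_circleMap]; fun_prop
  have hgγ : Continuous fun θ => g (γ θ) := hg.comp_continuous (continuous_circleMap 0 r) hγ
  have hline : ∀ x, Continuous fun θ => x + γ θ • v := fun x =>
    continuous_const.add ((continuous_circleMap 0 r).smul continuous_const)
  have hfγ : ∀ x ∈ U, Continuous fun θ => f (x + γ θ • v) := fun x hx =>
    continuous_iff_continuousAt.2 fun θ =>
      (hf x hx _ (hγ θ)).continuousAt.comp_of_eq (hline x).continuousAt rfl
  have key := intervalIntegral.hasFDerivAt_integral_of_dominated_of_fderiv_le
    (μ := volume) (a := 0) (b := 2 * π)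
    (F := fun x θ => deriv γ θ • g (γ θ) • f (x + γ θ • v))
    (F' := fun x θ => deriv γ θ • g (γ θ) • fderiv ℂ f (x + γ θ • v))
    (bound := fun θ => ‖deriv γ θ‖ * (‖g (γ θ)‖ * C)) hU
    (eventually_of_mem hU fun x hx => (hdγ.smul (hgγ.smul (hfγ x hx))).aestronglyMeasurable)
    ((hdγ.smul (hgγ.smul (hfγ z₀ (mem_of_mem_nhds hU)))).intervalIntegrable _ _)
    (hdγ.aestronglyMeasurable.smul (hgγ.aestronglyMeasurable.smul
      ((measurable_fderiv ℂ f).comp (hline z₀).measurable).aestronglyMeasurable))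
    (Eventually.of_forall fun θ _ x hx => by
      rw [norm_smul, norm_smul]
      gcongr
      exact hC x hx _ (hγ θ))
    ((hdγ.norm.mul (hgγ.norm.mul continuous_const)).intervalIntegrable _ _)
    (Eventually.of_forall fun θ _ x hx =>
      (((hf x hx _ (hγ θ)).hasFDerivAt.comp x ((hasFDerivAt_id x).add_const _)).const_smul
        (g (γ θ))).const_smul (deriv γ θ))
  exact key.differentiableAt

theorem DifferentiableOn.fderiv_apply [FiniteDimensional ℂ E] {f : E → ℂ} {s : Set E}
    (hf : DifferentiableOn ℂ f s) (hs : IsOpen s) (v : E) :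
    DifferentiableOn ℂ (fun z => fderiv ℂ f z v) s := by
  intro z₀ hz₀
  obtain ⟨δ, hδ, hδs⟩ := nhds_basis_closedBall.mem_iff.1 (hs.mem_nhds hz₀)
  obtain ⟨K, hK⟩ :=
    (isCompact_closedBall z₀ δ).exists_bound_of_continuousOn (hf.continuousOn.mono hδs)
  set r := δ / (3 * (‖v‖ + 1))
  have hr : 0 < r := by positivity
  have hrv : r * ‖v‖ ≤ δ / 3 := by
    rw [div_mul_eq_mul_div, div_le_div_iff₀ (by positivity) (by positivity)]
    nlinarith [norm_nonneg v]
  have hnear : ∀ x ∈ ball z₀ (δ / 3), ∀ ζ ∈ closedBall (0 : ℂ) r,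
      x + ζ • v ∈ closedBall z₀ (2 * δ / 3) := by
    intro x hx ζ hζ
    rw [mem_closedBall_zero_iff] at hζ
    rw [mem_ball_iff_norm] at hx
    rw [mem_closedBall_iff_norm, add_sub_right_comm]
    calc ‖x - z₀ + ζ • v‖ ≤ ‖x - z₀‖ + ‖ζ‖ * ‖v‖ :=
          (norm_add_le _ _).trans_eq (by rw [norm_smul])
      _ ≤ δ / 3 + r * ‖v‖ := by gcongr
      _ ≤ 2 * δ / 3 := by linarith
  have hsub : closedBall z₀ (2 * δ / 3) ⊆ s :=
    (closedBall_subset_closedBall (by linarith)).trans hδs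
  have hbound : ∀ a ∈ closedBall z₀ (2 * δ / 3), ‖fderiv ℂ f a‖ ≤ K / (δ / 3) := by
    intro a ha
    have hball : closedBall a (δ / 3) ⊆ closedBall z₀ δ :=
      closedBall_subset_closedBall' (by rw [mem_closedBall] at ha; linarith)
    exact norm_fderiv_le_of_forall_mem_closedBall_norm_le (by positivity)
      (hf.mono (hball.trans hδs)) fun x hx => hK x (hball hx)
  have hformula : (fun z => fderiv ℂ f z v) =ᶠ[𝓝 z₀]
      fun x => (2 * π * I)⁻¹ • ∮ ζ in C(0, r), (1 / ζ ^ 2) • f (x + ζ • v) :=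
    eventually_of_mem (ball_mem_nhds z₀ (by positivity)) fun x hx =>
      fderiv_apply_eq_circleIntegral hr hf hs fun ζ hζ => hsub (hnear x hx ζ hζ)
  refine (hformula.differentiableAt_iff.2 ?_).differentiableWithinAt
  refine (differentiableAt_circleIntegral_smul_comp_add_smul (C := K / (δ / 3)) hr.le
    (ball_mem_nhds z₀ (by positivity : 0 < δ / 3)) ?_ ?_ ?_).fun_const_smul _
  · exact (continuousOn_const.div (continuousOn_pow 2)) fun ζ hζ =>
      pow_ne_zero 2 (ne_of_mem_sphere hζ hr.ne')
  · exact fun x hx ζ hζ => hf.differentiableAt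
      (hs.mem_nhds (hsub (hnear x hx ζ (sphere_subset_closedBall hζ))))
  · exact fun x hx ζ hζ => hbound _ (hnear x hx ζ (sphere_subset_closedBall hζ))

end ComplexLine

section Polydisc

variable {n : ℕ} {D : Set (Fin n → ℂ)} {g : (Fin n → ℂ) → ℂ}

theorem DifferentiableOn.partialDeriv (hg : DifferentiableOn ℂ g D) (hD : IsOpen D) (i : Fin n) :
    DifferentiableOn ℂ (partialDeriv i g) D :=
  hg.fderiv_apply hD _

theorem DifferentiableOn.iterate_partialDeriv (hg : DifferentiableOn ℂ g D) (hD : IsOpen D)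
    (i : Fin n) (k : ℕ) : DifferentiableOn ℂ ((_root_.partialDeriv i)^[k] g) D := by
  induction k with
  | zero => exact hg
  | succ k ih =>
    rw [Function.iterate_succ_apply']
    exact ih.partialDeriv hD i

theorem iterate_partialDeriv_comp_add_smul_eqOn (hg : DifferentiableOn ℂ g D) (hD : IsOpen D)
    (i : Fin n) (k : ℕ) (x : Fin n → ℂ) :
    EqOn (fun ζ : ℂ => (partialDeriv i)^[k] g (x + ζ • Pi.single i 1))
      (deriv^[k] fun ζ : ℂ => g (x + ζ • Pi.single i 1)) {ζ | x + ζ • Pi.single i 1 ∈ D} := by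
  have hopen : IsOpen {ζ : ℂ | x + ζ • Pi.single i 1 ∈ D} := hD.preimage (by fun_prop)
  induction k with
  | zero => exact fun _ _ => rfl
  | succ k ih =>
    intro ζ₀ hζ₀
    have hdiff : DifferentiableAt ℂ ((partialDeriv i)^[k] g) (x + ζ₀ • Pi.single i 1) :=
      (hg.iterate_partialDeriv hD i k).differentiableAt (hD.mem_nhds hζ₀)
    simp only [Function.iterate_succ_apply']
    rw [← (ih.eventuallyEq_of_mem (hopen.mem_nhds hζ₀)).deriv_eq,
      hdiff.hasDerivAt_comp_add_smul.deriv]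
    rfl

theorem norm_iterate_partialDeriv_le (hg : DifferentiableOn ℂ g D) (hD : IsOpen D)
    (i : Fin n) (k : ℕ) {x : Fin n → ℂ} {R B : ℝ} (hR : 0 < R)
    (hxD : MapsTo (fun ζ : ℂ => x + ζ • Pi.single i 1) (closedBall 0 R) D)
    (hB : ∀ ζ ∈ sphere (0 : ℂ) R, ‖g (x + ζ • Pi.single i 1)‖ ≤ B) :
    ‖(partialDeriv i)^[k] g x‖ ≤ k.factorial * B / R ^ k := by
  have hslice := iterate_partialDeriv_comp_add_smul_eqOn hg hD i k x
    (hxD (mem_closedBall_self hR.le))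
  simp only [zero_smul, add_zero] at hslice
  rw [hslice, ← iteratedDeriv_eq_iterate]
  exact norm_iteratedDeriv_le_of_forall_mem_sphere_norm_le k hR
    ((hg.comp (by fun_prop) hxD).diffContOnCl_ball le_rfl) hB

theorem univ_pi_closedBall_update_subset {ι : Type*} [DecidableEq ι] {x : ι → ℂ} {r : ι → ℝ}
    {i : ι} {ζ : ℂ} (hζ : ‖ζ‖ ≤ r i) :
    univ.pi (fun j => closedBall ((x + ζ • Pi.single i (1 : ℂ) : ι → ℂ) j)
        (Function.update r i 0 j)) ⊆ univ.pi fun j => closedBall (x j) (r j) := by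
  intro y hy
  simp only [mem_univ_pi, mem_closedBall] at hy ⊢
  intro j
  rcases eq_or_ne j i with rfl | hji
  · have hyj := hy j
    simp only [Function.update_self, dist_le_zero] at hyj
    simpa [hyj] using hζ
  · simpa [Function.update_of_ne hji, Pi.single_eq_of_ne hji] using hy j

noncomputable def iteratedPartialDeriv (m : Fin n → ℕ) :
    List (Fin n) → ((Fin n → ℂ) → ℂ) → (Fin n → ℂ) → ℂ
  | [], g => g
  | i :: L, g => (partialDeriv i)^[m i] (iteratedPartialDeriv m L g)

theorem mixedPartialDeriv_eq_iteratedPartialDeriv (m : Fin n → ℕ) (f : (Fin n → ℂ) → ℂ) :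
    mixedPartialDeriv m f = iteratedPartialDeriv m (List.finRange n) f := by
  rw [mixedPartialDeriv, List.ofFn_eq_map]
  induction List.finRange n with
  | nil => rfl
  | cons i L ih => simp only [List.map_cons, List.foldr_cons, Function.comp_apply, ih]; rfl

theorem DifferentiableOn.iteratedPartialDeriv (hg : DifferentiableOn ℂ g D) (hD : IsOpen D)
    (m : Fin n → ℕ) (L : List (Fin n)) :
    DifferentiableOn ℂ (_root_.iteratedPartialDeriv m L g) D := by
  induction L with
  | nil => exact hg
  | cons i L ih => exact ih.iterate_partialDeriv hD i (m i)

theorem norm_iteratedPartialDeriv_le (hg : DifferentiableOn ℂ g D) (hD : IsOpen D)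
    (m : Fin n → ℕ) {L : List (Fin n)} (hL : L.Nodup) {x : Fin n → ℂ} {r : Fin n → ℝ}
    (hr₀ : 0 ≤ r) (hr : ∀ i ∈ L, 0 < r i) (hxD : univ.pi (fun j => closedBall (x j) (r j)) ⊆ D)
    {B : ℝ} (hB : ∀ y ∈ univ.pi (fun j => closedBall (x j) (r j)), ‖g y‖ ≤ B) :
    ‖iteratedPartialDeriv m L g x‖ ≤ B * (L.map fun i => (m i).factorial / r i ^ m i).prod := by
  induction L generalizing x r with
  | nil =>
    simpa [iteratedPartialDeriv] using hB x (mem_univ_pi.2 fun j => mem_closedBall_self (hr₀ j))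
  | cons i L ih =>
    obtain ⟨hiL, hL⟩ := List.nodup_cons.1 hL
    -- The induction hypothesis is used at `x + ζ • eᵢ`, `‖ζ‖ ≤ r i`, on the polydisc with
    -- radius `0` in coordinate `i`; it lies inside the original polydisc.
    set r' := Function.update r i 0
    have hr'_of_mem : ∀ j ∈ L, r' j = r j := fun j hj =>
      Function.update_of_ne (ne_of_mem_of_not_mem hj hiL) _ _
    have hr'₀ : 0 ≤ r' := le_update_iff.2 ⟨le_rfl, fun j _ => hr₀ j⟩
    have hr' : ∀ j ∈ L, 0 < r' j := fun j hj =>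
      (hr'_of_mem j hj).symm ▸ hr j (List.mem_cons_of_mem i hj)
    have hprod : (L.map fun j => (m j).factorial / r' j ^ m j) =
        L.map fun j => (m j).factorial / r j ^ m j :=
      List.map_congr_left fun j hj => by rw [hr'_of_mem j hj]
    have hsub : ∀ ζ ∈ closedBall (0 : ℂ) (r i),
        univ.pi (fun j => closedBall ((x + ζ • Pi.single i (1 : ℂ) : Fin n → ℂ) j) (r' j)) ⊆
          univ.pi fun j => closedBall (x j) (r j) :=
      fun ζ hζ => univ_pi_closedBall_update_subset (mem_closedBall_zero_iff.1 hζ)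
    have hcenter : ∀ ζ ∈ closedBall (0 : ℂ) (r i), x + ζ • Pi.single i 1 ∈
        univ.pi fun j => closedBall (x j) (r j) :=
      fun ζ hζ => hsub ζ hζ (mem_univ_pi.2 fun j => mem_closedBall_self (hr'₀ j))
    have hslice : ∀ ζ ∈ sphere (0 : ℂ) (r i), ‖iteratedPartialDeriv m L g
        (x + ζ • Pi.single i 1)‖ ≤ B * (L.map fun j => (m j).factorial / r j ^ m j).prod := by
      intro ζ hζ
      have hζ' := sphere_subset_closedBall hζ
      rw [← hprod]
      exact ih hL hr'₀ hr' ((hsub ζ hζ').trans hxD) fun y hy => hB y (hsub ζ hζ' hy)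
    calc ‖iteratedPartialDeriv m (i :: L) g x‖
        ≤ (m i).factorial * (B * (L.map fun j => (m j).factorial / r j ^ m j).prod) /
            r i ^ m i :=
          norm_iterate_partialDeriv_le (hg.iteratedPartialDeriv hD m L) hD i (m i)
            (hr i List.mem_cons_self) (fun ζ hζ => hxD (hcenter ζ hζ)) hslice
      _ = B * ((i :: L).map fun j => (m j).factorial / r j ^ m j).prod := by
          rw [List.map_cons, List.prod_cons]; ring

theorem norm_mixedPartialDeriv_le {f : (Fin n → ℂ) → ℂ} (hf : DifferentiableOn ℂ f D)
    (hD : IsOpen D) (m : Fin n → ℕ) {x : Fin n → ℂ} {r : Fin n → ℝ} (hr : ∀ i, 0 < r i)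
    (hxD : univ.pi (fun j => closedBall (x j) (r j)) ⊆ D)
    {B : ℝ} (hB : ∀ y ∈ univ.pi (fun j => closedBall (x j) (r j)), ‖f y‖ ≤ B) :
    ‖mixedPartialDeriv m f x‖ ≤ B * ∏ i, (m i).factorial / r i ^ m i := by
  rw [mixedPartialDeriv_eq_iteratedPartialDeriv, Fin.prod_univ_def]
  exact norm_iteratedPartialDeriv_le hf hD m (List.nodup_finRange n) (fun i => (hr i).le)
    (fun i _ => hr i) hxD hB

theorem DifferentiableOn.mixedPartialDeriv (hg : DifferentiableOn ℂ g D) (hD : IsOpen D)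
    (m : Fin n → ℕ) : DifferentiableOn ℂ (_root_.mixedPartialDeriv m g) D := by
  rw [mixedPartialDeriv_eq_iteratedPartialDeriv]
  exact hg.iteratedPartialDeriv hD m _

end Polydisc

theorem cauchy_inequalities_propagate_general
    (n : ℕ) (D C S : Set (Fin n → ℂ)) (hD : IsOpen D)
    (hMMP : SatisfiesMMP D C S)
    (ρ : ℝ) (hρ : 0 < ρ) (hthick : {z | Metric.infDist z S ≤ ρ} ⊆ D)
    (f : (Fin n → ℂ) → ℂ) (hf : DifferentiableOn ℂ f D)
    (M : ℝ)
    (hbound : ∀ z : Fin n → ℂ, Metric.infDist z S ≤ ρ → ‖f z‖ ≤ M) :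
    ∀ z ∈ C, ∀ m : Fin n → ℕ,
      ‖mixedPartialDeriv m f z‖ ≤
        M * (∏ i, ((m i).factorial : ℝ)) / ρ ^ (∑ i, m i) := by
  intro z hz m
  obtain ⟨w, hwS, hzw⟩ := hMMP _ (hf.mixedPartialDeriv hD m) z hz
  have hnear : ∀ y ∈ univ.pi (fun j => closedBall (w j) ρ), infDist y S ≤ ρ := fun y hy =>
    (infDist_le_dist_of_mem hwS).trans (by rwa [← closedBall_pi w hρ.le] at hy)
  calc ‖mixedPartialDeriv m f z‖ ≤ ‖mixedPartialDeriv m f w‖ := hzw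
    _ ≤ M * ∏ i, (m i).factorial / ρ ^ m i :=
      norm_mixedPartialDeriv_le hf hD m (fun _ => hρ) (fun y hy => hthick (hnear y hy))
        fun y hy => hbound y (hnear y hy)
    _ = M * (∏ i, ((m i).factorial : ℝ)) / ρ ^ (∑ i, m i) := by
      rw [Finset.prod_div_distrib, Finset.prod_pow_eq_pow_sum, mul_div_assoc]

/-- Key estimate (3.2) of the paper: Cauchy inequalities at points near the boundary `S`
propagate to all of `C` via the maximum modulus principle, since the Taylor-coefficient
functions are holomorphic on `D`. -/
theorem cauchy_inequalities_propagate
    (n : ℕ) (D C S : Set (Fin n → ℂ)) (hD : IsOpen D)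
    (hC : IsCompact C) (hCD : C ⊆ D) (hSC : S ⊆ C)
    (hMMP : SatisfiesMMP D C S)
    (ρ : ℝ) (hρ : 0 < ρ) (hthick : {z | Metric.infDist z S ≤ ρ} ⊆ D)
    (f : (Fin n → ℂ) → ℂ) (hf : DifferentiableOn ℂ f D)
    (M : ℝ) (hM : 0 ≤ M)
    (hbound : ∀ z : Fin n → ℂ, Metric.infDist z S ≤ ρ → ‖f z‖ ≤ M) :
    ∀ z ∈ C, ∀ m : Fin n → ℕ,
      ‖mixedPartialDeriv m f z‖ ≤
        M * (∏ i, ((m i).factorial : ℝ)) / ρ ^ (∑ i, m i) :=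
  cauchy_inequalities_propagate_general n D C S hD hMMP ρ hρ hthick f hf M hbound
end
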